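/- Let $p \ge 2$. For $x \in [0,1]$ define $y_0(x) = 1$, $m_0(x) = x$, and $y_{k+1}(x) = y_k(x)\,\frac{p-1+m_k(x)}{p}$, $m_{k+1}(x) = \bigl(\frac{p-1+m_k(x)}{p}\bigr)^{-p} m_k(x)$. Then $x^{1/p} \le y_{k+1}(x) \le y_k(x)$ for all $k$ and all $x \in [0,1]$, $y_k(x) \to x^{1/p}$ uniformly on $[0,1]$ as $k \to \infty$ (in particular $y_k(0)$ decreases to $0$), and, since $m_k(0)=0$ for all $k$, $m_k(x) \to 1$ pointwise on $(0,1]$ and uniformly on $[\delta,1]$ for each $\delta>0$. -/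

import Mathlib

open Set

/-- The residual sequence in the coupled Newton iteration for the `p`-th root:
`m_0(x) = x`, `m_{k+1}(x) = ((p-1+m_k(x))/p)^{-p} m_k(x)`. -/
noncomputable def pthRootM (p : ℕ) : ℕ → ℝ → ℝ
  | 0 => fun x => x
  | (k + 1) => fun x => pthRootM p k x / (((p : ℝ) - 1 + pthRootM p k x) / p) ^ p

/-- The main sequence in the coupled Newton iteration for the `p`-th root:
`y_0(x) = 1`, `y_{k+1}(x) = y_k(x) (p-1+m_k(x))/p`. -/
noncomputable def pthRootY (p : ℕ) : ℕ → ℝ → ℝ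
  | 0 => fun _ => 1
  | (k + 1) => fun x => pthRootY p k x * (((p : ℝ) - 1 + pthRootM p k x) / p)


section PthRootAuxAll
open Filter

/-- Dini's theorem for antitone sequences of real functions on a compact set. -/
lemma pthRootAux_dini_antitone {f : ℕ → ℝ → ℝ} {g : ℝ → ℝ} {K : Set ℝ} (hK : IsCompact K)
    (hf : ∀ n, ContinuousOn (f n) K) (hg : ContinuousOn g K)
    (hmono : ∀ x ∈ K, ∀ n, f (n + 1) x ≤ f n x)
    (hlim : ∀ x ∈ K, Tendsto (fun n => f n x) atTop (nhds (g x))) :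
    TendstoUniformlyOn f g atTop K := by
  have hanti : ∀ x ∈ K, Antitone fun n => f n x := fun x hx =>
    antitone_nat_of_succ_le (fun n => hmono x hx n)
  have hge : ∀ x ∈ K, ∀ n, g x ≤ f n x := by
    intro x hx n
    exact le_of_tendsto (hlim x hx)
      (Filter.eventually_atTop.2 ⟨n, fun m hm => hanti x hx hm⟩)
  rw [Metric.tendstoUniformlyOn_iff]
  intro ε hε
  have key : ∀ x ∈ K, ∃ N : ℕ, ∃ U : Set ℝ, IsOpen U ∧ x ∈ U ∧
      ∀ y ∈ U ∩ K, f N y - g y < ε := by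
    intro x hx
    obtain ⟨N, hN⟩ := Metric.tendsto_atTop.1 (hlim x hx) (ε / 2) (by linarith)
    have hNx : f N x - g x < ε / 2 := by
      have := hN N le_rfl
      rw [Real.dist_eq, abs_lt] at this
      linarith [this.1, this.2]
    have hc : ContinuousWithinAt (fun y => f N y - g y) K x := ((hf N x hx).sub (hg x hx))
    have hmem : {y | f N y - g y < ε} ∈ nhdsWithin x K := by
      have : Iio ε ∈ nhds (f N x - g x) := Iio_mem_nhds (by linarith)
      exact hc this
    rw [mem_nhdsWithin] at hmem
    obtain ⟨U, hUo, hxU, hU⟩ := hmem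
    exact ⟨N, U, hUo, hxU, fun y hy => hU hy⟩
  choose! N U hUo hxU hU using key
  obtain ⟨t, hts, ht⟩ := hK.elim_nhds_subcover U (fun x hx => (hUo x hx).mem_nhds (hxU x hx))
  refine Filter.eventually_atTop.2 ⟨t.sup N, fun n hn x hx => ?_⟩
  obtain ⟨z, hzt, hzU⟩ := Set.mem_iUnion₂.1 (ht hx)
  have hz : z ∈ K := hts z hzt
  have h1 : f (N z) x - g x < ε := hU z hz x ⟨hzU, hx⟩
  have h2 : f n x ≤ f (N z) x := hanti x hx (le_trans (Finset.le_sup hzt) hn)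
  have h3 := hge x hx n
  rw [Real.dist_eq, abs_lt]
  constructor <;> linarith

/-- Dini's theorem for monotone sequences of real functions on a compact set. -/
lemma pthRootAux_dini_monotone {f : ℕ → ℝ → ℝ} {g : ℝ → ℝ} {K : Set ℝ} (hK : IsCompact K)
    (hf : ∀ n, ContinuousOn (f n) K) (hg : ContinuousOn g K)
    (hmono : ∀ x ∈ K, ∀ n, f n x ≤ f (n + 1) x)
    (hlim : ∀ x ∈ K, Tendsto (fun n => f n x) atTop (nhds (g x))) :
    TendstoUniformlyOn f g atTop K := by
  have h := pthRootAux_dini_antitone (f := fun n x => -f n x) (g := fun x => -g x) hK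
    (fun n => (hf n).neg) hg.neg (fun x hx n => neg_le_neg (hmono x hx n))
    (fun x hx => (hlim x hx).neg)
  rw [Metric.tendstoUniformlyOn_iff] at h ⊢
  intro ε hε
  filter_upwards [h ε hε] with n hn x hx
  have := hn x hx
  rwa [Real.dist_eq, neg_sub_neg, ← Real.dist_eq, dist_comm] at this

variable {p : ℕ}

lemma pthRootAux_p_pos (hp : 2 ≤ p) : (0 : ℝ) < p := by positivity

lemma pthRootAux_c_pos (hp : 2 ≤ p) {m : ℝ} (hm : 0 ≤ m) : 0 < ((p : ℝ) - 1 + m) / p := by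
  have h2 : (2 : ℝ) ≤ p := by exact_mod_cast hp
  apply div_pos <;> linarith

lemma pthRootAux_c_le_one (hp : 2 ≤ p) {m : ℝ} (hm : m ≤ 1) : ((p : ℝ) - 1 + m) / p ≤ 1 := by
  have h : (0:ℝ) < p := pthRootAux_p_pos hp
  rw [div_le_one h]; linarith

/-- AM-GM / Bernoulli: `m ≤ ((p-1+m)/p)^p` for `m ≥ 0`. -/
lemma pthRootAux_bern (hp : 2 ≤ p) {m : ℝ} (hm : 0 ≤ m) :
    m ≤ (((p : ℝ) - 1 + m) / p) ^ p := by
  have h : (0:ℝ) < p := pthRootAux_p_pos hp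
  have h2 : (2:ℝ) ≤ p := by exact_mod_cast hp
  have ha : (-2 : ℝ) ≤ (m - 1) / p := by
    rw [le_div_iff₀ h]; nlinarith
  have hb := one_add_mul_le_pow ha p
  have heq : ((p : ℝ) - 1 + m) / p = 1 + (m - 1) / p := by field_simp; linarith
  rw [heq]
  calc m = 1 + (p : ℝ) * ((m - 1) / p) := by field_simp; ring
    _ ≤ (1 + (m - 1) / p) ^ p := hb



variable {p : ℕ}

lemma pthRootAux_key (hp : 2 ≤ p) {x : ℝ} (hx : x ∈ Icc (0:ℝ) 1) (k : ℕ) :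
    0 ≤ pthRootM p k x ∧ pthRootM p k x ≤ 1 ∧ 0 < pthRootY p k x ∧
      (pthRootY p k x) ^ p * pthRootM p k x = x := by
  induction k with
  | zero => exact ⟨hx.1, hx.2, one_pos, by simp [pthRootM, pthRootY]⟩
  | succ k ih =>
    obtain ⟨hm0, hm1, hy0, hinv⟩ := ih
    set c : ℝ := ((p : ℝ) - 1 + pthRootM p k x) / p with hc
    have hcpos : 0 < c := pthRootAux_c_pos hp hm0
    have hcp : 0 < c ^ p := pow_pos hcpos p
    refine ⟨?_, ?_, ?_, ?_⟩
    · exact div_nonneg hm0 hcp.le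
    · rw [pthRootM, div_le_one hcp]; exact pthRootAux_bern hp hm0
    · exact mul_pos hy0 hcpos
    · show (pthRootY p k x * c) ^ p * (pthRootM p k x / c ^ p) = x
      rw [mul_pow]
      field_simp
      linear_combination hinv

lemma pthRootAux_m_mono (hp : 2 ≤ p) {x : ℝ} (hx : x ∈ Icc (0:ℝ) 1) (k : ℕ) :
    pthRootM p k x ≤ pthRootM p (k + 1) x := by
  obtain ⟨hm0, hm1, -, -⟩ := pthRootAux_key hp hx k
  set c : ℝ := ((p : ℝ) - 1 + pthRootM p k x) / p with hc
  have hcpos : 0 < c := pthRootAux_c_pos hp hm0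
  have hcp : 0 < c ^ p := pow_pos hcpos p
  have hcle : c ^ p ≤ 1 := pow_le_one₀ hcpos.le (pthRootAux_c_le_one hp hm1)
  show pthRootM p k x ≤ pthRootM p k x / c ^ p
  rw [le_div_iff₀ hcp]
  nlinarith

lemma pthRootAux_y_anti (hp : 2 ≤ p) {x : ℝ} (hx : x ∈ Icc (0:ℝ) 1) (k : ℕ) :
    pthRootY p (k + 1) x ≤ pthRootY p k x := by
  obtain ⟨hm0, hm1, hy0, -⟩ := pthRootAux_key hp hx k
  show pthRootY p k x * _ ≤ pthRootY p k x
  nlinarith [pthRootAux_c_le_one (p := p) hp hm1, hy0]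

lemma pthRootAux_y_lower (hp : 2 ≤ p) {x : ℝ} (hx : x ∈ Icc (0:ℝ) 1) (k : ℕ) :
    x ^ ((p : ℝ)⁻¹) ≤ pthRootY p k x := by
  obtain ⟨hm0, hm1, hy0, hinv⟩ := pthRootAux_key hp hx k
  have hxle : x ≤ (pthRootY p k x) ^ p := by nlinarith [pow_pos hy0 p]
  have hpne : p ≠ 0 := by omega
  calc x ^ ((p : ℝ)⁻¹) ≤ ((pthRootY p k x) ^ p) ^ ((p : ℝ)⁻¹) :=
        Real.rpow_le_rpow hx.1 hxle (by positivity)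
    _ = pthRootY p k x := Real.pow_rpow_inv_natCast hy0.le hpne

lemma pthRootAux_m_zero (p : ℕ) (k : ℕ) : pthRootM p k 0 = 0 := by
  induction k with
  | zero => rfl
  | succ k ih => show pthRootM p k 0 / _ = 0; rw [ih]; simp

lemma pthRootAux_y_at_zero (p : ℕ) (k : ℕ) : pthRootY p k 0 = (((p : ℝ) - 1) / p) ^ k := by
  induction k with
  | zero => rfl
  | succ k ih =>
    show pthRootY p k 0 * (((p : ℝ) - 1 + pthRootM p k 0) / p) = _
    rw [ih, pthRootAux_m_zero, pow_succ, add_zero]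

lemma pthRootAux_cont (hp : 2 ≤ p) (k : ℕ) :
    ContinuousOn (pthRootM p k) (Icc 0 1) ∧ ContinuousOn (pthRootY p k) (Icc 0 1) := by
  induction k with
  | zero => exact ⟨continuousOn_id, continuousOn_const⟩
  | succ k ih =>
    obtain ⟨hm, hy⟩ := ih
    have hc : ContinuousOn (fun x => (((p : ℝ) - 1 + pthRootM p k x) / p)) (Icc 0 1) :=
      (continuousOn_const.add hm).div_const _
    have hcne : ∀ x ∈ Icc (0:ℝ) 1, (((p : ℝ) - 1 + pthRootM p k x) / p) ^ p ≠ 0 := by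
      intro x hx
      exact (pow_pos (pthRootAux_c_pos hp (pthRootAux_key hp hx k).1) p).ne'
    exact ⟨hm.div (hc.pow p) hcne, hy.mul hc⟩

lemma pthRootAux_m_tendsto (hp : 2 ≤ p) {x : ℝ} (hx : x ∈ Ioc (0:ℝ) 1) :
    Tendsto (fun k => pthRootM p k x) atTop (nhds 1) := by
  have hx' : x ∈ Icc (0:ℝ) 1 := ⟨hx.1.le, hx.2⟩
  have hmono : Monotone (fun k => pthRootM p k x) :=
    monotone_nat_of_le_succ (fun k => pthRootAux_m_mono hp hx' k)
  have hbdd : BddAbove (Set.range fun k => pthRootM p k x) :=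
    ⟨1, fun y ⟨k, hk⟩ => hk ▸ (pthRootAux_key hp hx' k).2.1⟩
  set ℓ : ℝ := ⨆ k, pthRootM p k x with hℓ
  have htend : Tendsto (fun k => pthRootM p k x) atTop (nhds ℓ) :=
    tendsto_atTop_ciSup hmono hbdd
  have hℓ1 : ℓ ≤ 1 := ciSup_le (fun k => (pthRootAux_key hp hx' k).2.1)
  have hℓx : x ≤ ℓ := le_ciSup hbdd 0
  have hℓpos : 0 < ℓ := lt_of_lt_of_le hx.1 hℓx
  set c : ℝ := ((p : ℝ) - 1 + ℓ) / p with hc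
  have hcpos : 0 < c := pthRootAux_c_pos hp hℓpos.le
  have hcp : (c : ℝ) ^ p ≠ 0 := (pow_pos hcpos p).ne'
  have h1 : Tendsto (fun k => pthRootM p (k + 1) x) atTop (nhds ℓ) :=
    htend.comp (tendsto_add_atTop_nat 1)
  have h2 : Tendsto (fun k => pthRootM p (k + 1) x) atTop (nhds (ℓ / c ^ p)) := by
    have : Tendsto (fun k => pthRootM p k x / (((p:ℝ) - 1 + pthRootM p k x) / p) ^ p)
        atTop (nhds (ℓ / c ^ p)) :=
      htend.div (((tendsto_const_nhds.add htend).div_const _).pow p) hcp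
    exact this
  have heq : ℓ / c ^ p = ℓ := tendsto_nhds_unique h2 h1
  have hcp1 : c ^ p = 1 := by
    rw [div_eq_iff hcp] at heq
    have h2 : ℓ * 1 = ℓ * c ^ p := by linarith
    exact (mul_left_cancel₀ hℓpos.ne' h2).symm
  have hpne0 : p ≠ 0 := by omega
  have hc1 : c = 1 := by
    by_contra hne
    have hlt : c < 1 := lt_of_le_of_ne (pthRootAux_c_le_one hp hℓ1) hne
    have := pow_lt_one₀ hcpos.le hlt hpne0
    rw [hcp1] at this; exact lt_irrefl _ this
  have hℓ1' : ℓ = 1 := by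
    have hppos : (0:ℝ) < p := pthRootAux_p_pos hp
    rw [hc, div_eq_one_iff_eq hppos.ne'] at hc1
    linarith
  rwa [hℓ1'] at htend

lemma pthRootAux_y_tendsto (hp : 2 ≤ p) {x : ℝ} (hx : x ∈ Icc (0:ℝ) 1) :
    Tendsto (fun k => pthRootY p k x) atTop (nhds (x ^ ((p : ℝ)⁻¹))) := by
  have hpne : p ≠ 0 := by omega
  rcases eq_or_lt_of_le hx.1 with h0 | hpos
  · -- x = 0
    rw [← h0, Real.zero_rpow (by positivity : ((p:ℝ)⁻¹) ≠ 0)]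
    simp only [← h0, pthRootAux_y_at_zero]
    apply tendsto_pow_atTop_nhds_zero_of_lt_one
    · have : (2:ℝ) ≤ p := by exact_mod_cast hp
      apply div_nonneg <;> linarith
    · have : (0:ℝ) < p := pthRootAux_p_pos hp
      rw [div_lt_one this]; linarith
  · have hm := pthRootAux_m_tendsto hp ⟨hpos, hx.2⟩
    have hyx : ∀ k, pthRootY p k x = (x / pthRootM p k x) ^ ((p : ℝ)⁻¹) := by
      intro k
      obtain ⟨hm0, hm1, hy0, hinv⟩ := pthRootAux_key hp hx k
      have hmpos : 0 < pthRootM p k x := by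
        calc (0:ℝ) < x := hpos
          _ = pthRootM p 0 x := rfl
          _ ≤ pthRootM p k x :=
            (monotone_nat_of_le_succ (fun j => pthRootAux_m_mono hp hx j)) (Nat.zero_le k)
      have : x / pthRootM p k x = (pthRootY p k x) ^ p := by
        field_simp; linarith [hinv]
      rw [this, Real.pow_rpow_inv_natCast hy0.le hpne]
    simp only [hyx]
    have hdiv : Tendsto (fun k => x / pthRootM p k x) atTop (nhds x) := by
      have := tendsto_const_nhds.div hm (one_ne_zero) (f := fun _ : ℕ => x)
      rw [div_one] at this
      exact this
    exact ((Real.continuousAt_rpow_const x _ (Or.inl hpos.ne')).tendsto.comp hdiv)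

end PthRootAuxAll

/-- For `p ≥ 2` and `x ∈ [0,1]`: `x^{1/p} ≤ y_{k+1}(x) ≤ y_k(x)` for all `k`; `y_k → x^{1/p}`
uniformly on `[0,1]`; `m_k(x) → 1` pointwise on `(0,1]` and uniformly on `[δ,1]` for each
`δ > 0`; `m_k(0) = 0` for all `k`; and `y_k(0)` decreases to `0`. -/
theorem pthRoot_newton_convergence (p : ℕ) (hp : 2 ≤ p) :
    (∀ x ∈ Icc (0 : ℝ) 1, ∀ k : ℕ,
        x ^ ((p : ℝ)⁻¹) ≤ pthRootY p (k + 1) x ∧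
          pthRootY p (k + 1) x ≤ pthRootY p k x) ∧
      TendstoUniformlyOn (fun k x => pthRootY p k x) (fun x => x ^ ((p : ℝ)⁻¹))
        Filter.atTop (Icc 0 1) ∧
      (∀ x ∈ Ioc (0 : ℝ) 1,
        Filter.Tendsto (fun k => pthRootM p k x) Filter.atTop (nhds 1)) ∧
      (∀ δ > (0 : ℝ), TendstoUniformlyOn (fun k x => pthRootM p k x) (fun _ => 1)
        Filter.atTop (Icc δ 1)) ∧
      (∀ k, pthRootM p k 0 = 0) ∧
      Filter.Tendsto (fun k => pthRootY p k 0) Filter.atTop (nhds 0) := by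
    refine ⟨fun x hx k => ⟨pthRootAux_y_lower hp hx (k+1), pthRootAux_y_anti hp hx k⟩, ?_, ?_, ?_, pthRootAux_m_zero p, ?_⟩
    · -- uniform convergence of y on [0,1]
      refine pthRootAux_dini_antitone isCompact_Icc (fun n => (pthRootAux_cont hp n).2) ?_
        (fun x hx n => pthRootAux_y_anti hp hx n) (fun x hx => pthRootAux_y_tendsto hp hx)
      have hpos : (0:ℝ) < (p : ℝ)⁻¹ := by
        have := pthRootAux_p_pos hp; positivity
      exact (continuous_iff_continuousAt.2
        (fun x => Real.continuousAt_rpow_const x _ (Or.inr hpos.le))).continuousOn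
    · exact fun x hx => pthRootAux_m_tendsto hp hx
    · -- uniform convergence of m on [δ,1]
      intro δ hδ
      have hsub : Icc δ 1 ⊆ Icc (0:ℝ) 1 := fun x hx => ⟨le_trans hδ.le hx.1, hx.2⟩
      refine pthRootAux_dini_monotone isCompact_Icc
        (fun n => ((pthRootAux_cont hp n).1).mono hsub) continuousOn_const
        (fun x hx n => pthRootAux_m_mono hp (hsub hx) n)
        (fun x hx => pthRootAux_m_tendsto hp ⟨lt_of_lt_of_le hδ hx.1, hx.2⟩)
    · -- y_k(0) → 0
      have h0 : (0:ℝ) ∈ Set.Icc (0:ℝ) 1 := ⟨le_refl _, zero_le_one⟩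
      have := pthRootAux_y_tendsto hp h0
      have hppos := pthRootAux_p_pos hp
      rwa [Real.zero_rpow (by positivity : ((p:ℝ)⁻¹) ≠ 0)] at this
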